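/- arXiv:2312.13777 — 2 statements merged into one kernel-verified Lean document; each statement's English description precedes it below -/
import Mathlib

section
/- Let M, K, R be natural numbers with M ≤ 2K, K ≤ M, and R ≤ M−K. Then 2^R · C(M−K, R) ≤ C(M, R); equivalently, when at least half of the M transactions in a batch are invalid, the probability p = C(M−K, R)/C(M, R) that a random sample of R transactions contains no invalid transaction is at most (1/2)^R. -/
/-! `C(n, r) / C(m, r)` is the product of the factors `(n - i) / (m - i)` for `i < r`, and each of
them is at most `1 / 2` once `2 * n ≤ m`. -/

theorem two_pow_mul_choose_le_choose {n m : ℕ} (h : 2 * n ≤ m) (r : ℕ) :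
    2 ^ r * n.choose r ≤ m.choose r := by
  induction r with
  | zero => simp
  | succ r ih =>
    refine Nat.le_of_mul_le_mul_right ?_ r.succ_pos
    calc 2 ^ (r + 1) * n.choose (r + 1) * (r + 1)
        = 2 ^ r * n.choose r * (2 * (n - r)) := by
          rw [mul_assoc, Nat.choose_succ_right_eq]; ring
      _ ≤ m.choose r * (m - r) := Nat.mul_le_mul ih (by omega)
      _ = m.choose (r + 1) * (r + 1) := (Nat.choose_succ_right_eq m r).symm

theorem choose_div_choose_le_half_pow {n m : ℕ} (h : 2 * n ≤ m) (r : ℕ) :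
    (n.choose r : ℝ) / m.choose r ≤ (1 / 2 : ℝ) ^ r := by
  refine div_le_of_le_mul₀ (by positivity) (by positivity) ?_
  rw [one_div_pow, one_div_mul_eq_div, le_div_iff₀ (by positivity), mul_comm]
  exact_mod_cast two_pow_mul_choose_le_choose h r

theorem miss_probability_half_pow_general (M K R : ℕ) (hM : M ≤ 2 * K) :
    2 ^ R * (M - K).choose R ≤ M.choose R ∧
    (((M - K).choose R : ℝ) / (M.choose R : ℝ)) ≤ (1 / 2 : ℝ) ^ R :=
  have hMK : 2 * (M - K) ≤ M := by omega
  ⟨two_pow_mul_choose_le_choose hMK R, choose_div_choose_le_half_pow hMK R⟩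

/-- If M ≤ 2K, K ≤ M and R ≤ M−K, then 2^R · C(M−K, R) ≤ C(M, R); equivalently
the probability p = C(M−K, R)/C(M, R) is at most (1/2)^R. -/
theorem miss_probability_half_pow (M K R : ℕ) (hM : M ≤ 2 * K) (hK : K ≤ M)
    (hR : R ≤ M - K) :
    2 ^ R * (M - K).choose R ≤ M.choose R ∧
    (((M - K).choose R : ℝ) / (M.choose R : ℝ)) ≤ (1 / 2 : ℝ) ^ R :=
  miss_probability_half_pow_general M K R hM
end

section
/- Let K and R be natural numbers with 1 ≤ R ≤ K, let M = 2K, and let p = C(M−K, R)/C(M, R) = C(K, R)/C(2K, R) as a real number. Then (1/2)·((1−p)^{12} + 1) ≥ 1 − 6·(1/2)^R; i.e., for F = 3 and a batch in which half the transactions are invalid, sampling R transactions per correct secondary batcher guarantees validity probability α at least 1 − 6·2^{−R}. -/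
/-! Every factor of `C(2K, R)` is at least twice the matching factor of `C(K, R)`, so the
probability `p = C(K, R) / C(2K, R)` of missing all invalid transactions is at most `2⁻ᴿ`.
Bernoulli's inequality `(1 - p) ^ 12 ≥ 1 - 12 p` then gives `α ≥ 1 - 6 p ≥ 1 - 6 · 2⁻ᴿ`. -/

namespace Nat

theorem pow_mul_descFactorial_le_descFactorial_mul (a K R : ℕ) :
    a ^ R * K.descFactorial R ≤ (a * K).descFactorial R := by
  induction R with
  | zero => simp
  | succ n ih =>
    have hfactor : a * (K - n) ≤ a * K - n := by
      rcases a.eq_zero_or_pos with rfl | ha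
      · simp
      · rw [Nat.mul_sub]
        exact Nat.sub_le_sub_left (Nat.le_mul_of_pos_left n ha) _
    rw [descFactorial_succ, descFactorial_succ, pow_succ]
    calc a ^ n * a * ((K - n) * K.descFactorial n)
        = a * (K - n) * (a ^ n * K.descFactorial n) := by ring
      _ ≤ (a * K - n) * (a * K).descFactorial n := Nat.mul_le_mul hfactor ih

theorem pow_mul_choose_le_choose_mul (a K R : ℕ) :
    a ^ R * K.choose R ≤ (a * K).choose R := by
  have h := pow_mul_descFactorial_le_descFactorial_mul a K R
  rw [descFactorial_eq_factorial_mul_choose, descFactorial_eq_factorial_mul_choose,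
    mul_left_comm] at h
  exact Nat.le_of_mul_le_mul_left h R.factorial_pos

end Nat

theorem choose_div_choose_mul_le {a : ℕ} (ha : 0 < a) (K R : ℕ) :
    (K.choose R : ℝ) / ((a * K).choose R : ℝ) ≤ (a : ℝ)⁻¹ ^ R := by
  rcases ((a * K).choose R).eq_zero_or_pos with hzero | hpos
  · simp [hzero]
  have hle : (a : ℝ) ^ R * K.choose R ≤ (a * K).choose R := by
    exact_mod_cast Nat.pow_mul_choose_le_choose_mul a K R
  rw [div_le_iff₀ (by exact_mod_cast hpos), inv_pow, inv_mul_eq_div,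
    le_div_iff₀ (by positivity)]
  linarith

theorem alpha_bound_half_invalid_general (K R M : ℕ)
    (hM : M = 2 * K) (p : ℝ)
    (hp : p = ((M - K).choose R : ℝ) / (M.choose R : ℝ)) :
    (1 / 2 : ℝ) * ((1 - p) ^ 12 + 1) ≥ 1 - 6 * (1 / 2 : ℝ) ^ R := by
  have hMK : M - K = K := by omega
  have hp_le : p ≤ (1 / 2 : ℝ) ^ R := by
    rw [hp, hMK, hM, one_div]
    exact_mod_cast choose_div_choose_mul_le two_pos K R
  have hp_le_two : p ≤ 2 := by
    linarith [pow_le_one₀ (by norm_num : (0 : ℝ) ≤ 1 / 2) (by norm_num) (n := R)]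
  have hbernoulli : 1 + (12 : ℕ) * -p ≤ (1 + -p) ^ 12 := one_add_mul_le_pow (by linarith) 12
  push_cast at hbernoulli
  linarith

/-- For 1 ≤ R ≤ K, M = 2K and p = C(M−K, R)/C(M, R), we have
(1/2)((1−p)^12 + 1) ≥ 1 − 6·(1/2)^R. -/
theorem alpha_bound_half_invalid (K R M : ℕ) (hR1 : 1 ≤ R) (hRK : R ≤ K)
    (hM : M = 2 * K) (p : ℝ)
    (hp : p = ((M - K).choose R : ℝ) / (M.choose R : ℝ)) :
    (1 / 2 : ℝ) * ((1 - p) ^ 12 + 1) ≥ 1 - 6 * (1 / 2 : ℝ) ^ R :=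
  alpha_bound_half_invalid_general K R M hM p hp
end
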